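/- arXiv:1506.05692 — 8 statements merged into one kernel-verified Lean document; each statement's English description precedes it below -/
import Mathlib

section
/- If two label powersets Y_LP1 and Y_LP2 each satisfy conditional independence from the remaining labels given X, and the distribution satisfies Decomposition, Weak Union and Contraction, then their intersection Y_LP1 ∩ Y_LP2 is also a label powerset (i.e., it is conditionally independent of all remaining labels given X). -/
open Set

structure Semigraphoid (α : Type*) where
  ci : Set α → Set α → Set α → Prop
  symm : ∀ ⦃A B C : Set α⦄, Disjoint A B → Disjoint A C → Disjoint B C →
    ci A B C → ci B A C
  decomposition : ∀ ⦃A B C D : Set α⦄, Disjoint A B → Disjoint A C → Disjoint A D →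
    Disjoint B C → Disjoint B D → Disjoint C D →
    ci A (B ∪ D) C → ci A B C
  weakUnion : ∀ ⦃A B C D : Set α⦄, Disjoint A B → Disjoint A C → Disjoint A D →
    Disjoint B C → Disjoint B D → Disjoint C D →
    ci A (B ∪ D) C → ci A B (C ∪ D)
  contraction : ∀ ⦃A B C D : Set α⦄, Disjoint A B → Disjoint A C → Disjoint A D →
    Disjoint B C → Disjoint B D → Disjoint C D →
    ci A B (C ∪ D) → ci A D C → ci A (B ∪ D) C

/-- Under Decomposition, Weak Union and Contraction (semi-graphoid axioms),
the intersection of two label powersets is a label powerset. -/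
theorem intersection_of_label_powersets {α : Type*} (G : Semigraphoid α)
    (X Y Z1 Z2 : Set α) (hXY : Disjoint X Y)
    (hZ1 : Z1 ⊆ Y) (hZ2 : Z2 ⊆ Y)
    (hLP1 : G.ci Z1 (Y \ Z1) X) (hLP2 : G.ci Z2 (Y \ Z2) X) :
    G.ci (Z1 ∩ Z2) (Y \ (Z1 ∩ Z2)) X := by
  have hXY' : ∀ x, x ∈ X → x ∈ Y → False := fun x hx hy => Set.disjoint_left.1 hXY hx hy
  set A := Z1 ∩ Z2 with hA
  set W1 := Z1 \ Z2 with hW1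
  have hZ1split : Z1 = A ∪ W1 := by
    ext x; simp only [hA, hW1, mem_union, mem_inter_iff, mem_diff]; tauto
  have hZ2split : Z2 = A ∪ (Z2 \ Z1) := by
    ext x; simp only [hA, mem_union, mem_inter_iff, mem_diff]; tauto
  have hYZ2split : Y \ Z2 = W1 ∪ ((Y \ Z2) \ Z1) := by
    ext x; simp [hW1]
    constructor
    · rintro ⟨hy, hz⟩; by_cases h1 : x ∈ Z1 <;> tauto
    · rintro (⟨h1, h2⟩ | ⟨⟨hy, h2⟩, h1⟩)
      · exact ⟨hZ1 h1, h2⟩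
      · exact ⟨hy, h2⟩
  have hfinal : Y \ A = (Y \ Z1) ∪ W1 := by
    ext x; simp [hA, hW1]
    constructor
    · rintro ⟨hy, hz⟩; by_cases h1 : x ∈ Z1 <;> tauto
    · rintro (⟨hy, h1⟩ | ⟨h1, h2⟩)
      · exact ⟨hy, fun hx1 => absurd hx1 h1⟩
      · exact ⟨hZ1 h1, fun _ => h2⟩
  -- Step 1: A ⊥ (Y \ Z1) | X ∪ W1
  have s1 : G.ci (Y \ Z1) (A ∪ W1) X := by
    rw [← hZ1split]
    apply G.symm ?_ ?_ ?_ hLP1 <;>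
      (rw [Set.disjoint_left]; intro x hx hx') <;>
      (try simp only [hA, hW1, Set.mem_diff, Set.mem_inter_iff] at hx hx') <;>
      first
        | tauto
        | exact hXY' x hx' (hZ1 hx)
        | exact hXY' x hx' (hZ2 hx)
        | exact hXY' x hx' (hZ1 hx.1)
        | exact hXY' x hx' hx.1
  have s2 : G.ci (Y \ Z1) A (X ∪ W1) := by
    apply G.weakUnion ?_ ?_ ?_ ?_ ?_ ?_ s1 <;>
      (rw [Set.disjoint_left]; intro x hx hx') <;>
      (try simp only [hA, hW1, Set.mem_diff, Set.mem_inter_iff] at hx hx') <;>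
      first
        | tauto
        | exact hXY' x hx' (hZ1 hx)
        | exact hXY' x hx' (hZ2 hx)
        | exact hXY' x hx' hx.1
        | exact hXY' x hx (hZ1 hx'.1)
  have s3 : G.ci A (Y \ Z1) (X ∪ W1) := by
    apply G.symm ?_ ?_ ?_ s2 <;>
      (rw [Set.disjoint_left]; intro x hx hx') <;>
      (try simp only [hA, hW1, Set.mem_diff, Set.mem_inter_iff, Set.mem_union] at hx hx') <;>
      first
        | tauto
        | exact hXY' x hx' (hZ1 hx)
        | exact hXY' x hx' (hZ2 hx)
        | (rcases hx' with h | h; exact hXY' x h hx.1; tauto)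
        | (rcases hx' with h | h; exact hXY' x h (hZ1 hx.1); tauto)
  -- Step 2: A ⊥ W1 | X
  have t1 : G.ci Z2 (W1 ∪ ((Y \ Z2) \ Z1)) X := by rw [← hYZ2split]; exact hLP2
  have t2 : G.ci Z2 W1 X := by
    apply G.decomposition ?_ ?_ ?_ ?_ ?_ ?_ t1 <;>
      (rw [Set.disjoint_left]; intro x hx hx') <;>
      (try simp only [hA, hW1, Set.mem_diff, Set.mem_inter_iff] at hx hx') <;>
      first
        | tauto
        | exact hXY' x hx' (hZ1 hx)
        | exact hXY' x hx' (hZ2 hx)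
        | exact hXY' x hx' (hZ2 hx)
        | exact hXY' x hx' (hZ1 hx.1)
        | exact hXY' x hx' hx.1.1
  have t3 : G.ci W1 (A ∪ (Z2 \ Z1)) X := by
    rw [← hZ2split]
    apply G.symm ?_ ?_ ?_ t2 <;>
      (rw [Set.disjoint_left]; intro x hx hx') <;>
      (try simp only [hA, hW1, Set.mem_diff, Set.mem_inter_iff] at hx hx') <;>
      first
        | tauto
        | exact hXY' x hx' (hZ1 hx)
        | exact hXY' x hx' (hZ2 hx)
        | exact hXY' x hx' (hZ2 hx)
        | exact hXY' x hx' (hZ1 hx.1)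
  have t4 : G.ci W1 A X := by
    apply G.decomposition ?_ ?_ ?_ ?_ ?_ ?_ t3 <;>
      (rw [Set.disjoint_left]; intro x hx hx') <;>
      (try simp only [hA, hW1, Set.mem_diff, Set.mem_inter_iff] at hx hx') <;>
      first
        | tauto
        | exact hXY' x hx' (hZ1 hx)
        | exact hXY' x hx' (hZ2 hx)
        | exact hXY' x hx' (hZ1 hx.1)
        | exact hXY' x hx (hZ1 hx'.1)
  have t5 : G.ci A W1 X := by
    apply G.symm ?_ ?_ ?_ t4 <;>
      (rw [Set.disjoint_left]; intro x hx hx') <;>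
      (try simp only [hA, hW1, Set.mem_diff, Set.mem_inter_iff] at hx hx') <;>
      first
        | tauto
        | exact hXY' x hx' (hZ1 hx)
        | exact hXY' x hx' (hZ2 hx)
        | exact hXY' x hx' (hZ1 hx.1)
  -- Step 3: contraction
  rw [hfinal]
  apply G.contraction ?_ ?_ ?_ ?_ ?_ ?_ s3 t5 <;>
    (rw [Set.disjoint_left]; intro x hx hx') <;>
    (try simp only [hA, hW1, Set.mem_diff, Set.mem_inter_iff] at hx hx') <;>
    first
      | tauto
        | exact hXY' x hx' (hZ1 hx)
        | exact hXY' x hx' (hZ2 hx)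
      | exact hXY' x hx' hx.1.1
      | exact hXY' x hx' hx.1
      | exact hXY' x hx (hZ1 hx'.1)
end

section
/- Under the semi-graphoid axioms, if for labels Y_i ≠ Y_j there exists a set Z ⊆ Y \ {Y_i, Y_j} such that Y_i is conditionally dependent on Y_j given X ∪ Z, then every label powerset containing Y_i also contains Y_j; consequently the minimal label powersets of Y_i and Y_j coincide (assuming minimal label powersets exist and intersecting label powersets are label powersets). -/
open Set

/-- `Z` is a label powerset of the label set `Y` given features `X`. -/
def IsLP {α : Type*} (G : Semigraphoid α) (X Y Z : Set α) : Prop :=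
  Z ⊆ Y ∧ G.ci Z (Y \ Z) X

/-- `Z` is a minimal label powerset: nonempty, and no nonempty proper subset
is a label powerset. -/
def IsMinLP {α : Type*} (G : Semigraphoid α) (X Y Z : Set α) : Prop :=
  IsLP G X Y Z ∧ Z.Nonempty ∧ ∀ W ⊆ Z, W.Nonempty → IsLP G X Y W → W = Z

lemma key_ci {α : Type*} (G : Semigraphoid α) (X Y : Set α) (hXY : Disjoint X Y)
    (Yi Yj : α) (hYi : Yi ∈ Y) (hYj : Yj ∈ Y) (hne : Yi ≠ Yj)
    (W : Set α) (hW : IsLP G X Y W) (hiW : Yi ∈ W) (hjW : Yj ∉ W)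
    (Z : Set α) (hZ : Z ⊆ Y \ {Yi, Yj}) : G.ci {Yi} {Yj} (X ∪ Z) := by
  obtain ⟨hWY, hci⟩ := hW
  set Z1 := Z ∩ W with hZ1def
  set Z2 := Z \ W with hZ2def
  set R := W \ ({Yi} ∪ Z1) with hRdef
  set S := (Y \ W) \ ({Yj} ∪ Z2) with hSdef
  have hZY : Z ⊆ Y := hZ.trans diff_subset
  have hZi : Yi ∉ Z := fun h => (hZ h).2 (by simp)
  have hZj : Yj ∉ Z := fun h => (hZ h).2 (by simp)
  have hjYW : Yj ∈ Y \ W := ⟨hYj, hjW⟩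
  have hZ1W : Z1 ⊆ W := inter_subset_right
  have hZ2YW : Z2 ⊆ Y \ W := fun x hx => ⟨hZY hx.1, hx.2⟩
  have hiW' : ({Yi} : Set α) ⊆ W := singleton_subset_iff.2 hiW
  have hjYW' : ({Yj} : Set α) ⊆ Y \ W := singleton_subset_iff.2 hjYW
  have hRW : R ⊆ W := diff_subset
  have hSYW : S ⊆ Y \ W := diff_subset
  have hYWY : Y \ W ⊆ Y := diff_subset
  have dWc : Disjoint W (Y \ W) := disjoint_sdiff_right
  have dX : ∀ T ⊆ Y, Disjoint T X := fun T hT => (hXY.mono_right hT).symm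
  -- key set equalities
  have eW : ({Yi} ∪ Z1) ∪ R = W := union_diff_cancel (union_subset hiW' hZ1W)
  have eYW : ({Yj} ∪ S) ∪ Z2 = Y \ W := by
    rw [union_right_comm]
    exact union_diff_cancel (union_subset hjYW' hZ2YW)
  have eZ : (X ∪ Z2) ∪ Z1 = X ∪ Z := by
    rw [union_assoc, hZ1def, hZ2def, diff_union_inter]
  -- disjointness facts
  have d_i_Z1 : Disjoint ({Yi} : Set α) Z1 :=
    disjoint_singleton_left.mpr (fun h => hZi h.1)
  have d_iZ1_R : Disjoint ({Yi} ∪ Z1) R := disjoint_sdiff_right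
  have d_j_Z2 : Disjoint ({Yj} : Set α) Z2 :=
    disjoint_singleton_left.mpr (fun h => hZj h.1)
  have d_jZ2_S : Disjoint ({Yj} ∪ Z2) S := disjoint_sdiff_right
  have d_j_S : Disjoint ({Yj} : Set α) S := d_jZ2_S.mono_left subset_union_left
  have d_Z2_S : Disjoint Z2 S := d_jZ2_S.mono_left subset_union_right
  have hiZ1W : ({Yi} ∪ Z1 : Set α) ⊆ W := union_subset hiW' hZ1W
  have hjSYW : ({Yj} ∪ S : Set α) ⊆ Y \ W := union_subset hjYW' hSYW
  have d_iZ1_X : Disjoint ({Yi} ∪ Z1 : Set α) X := dX _ (hiZ1W.trans hWY)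
  have d_YW_iZ1 : Disjoint (Y \ W) ({Yi} ∪ Z1) := dWc.symm.mono_right hiZ1W
  have d_iZ1_jS : Disjoint ({Yi} ∪ Z1 : Set α) ({Yj} ∪ S) :=
    dWc.mono hiZ1W hjSYW
  have d_iZ1_Z2 : Disjoint ({Yi} ∪ Z1 : Set α) Z2 := dWc.mono hiZ1W hZ2YW
  have d_iZ1_S : Disjoint ({Yi} ∪ Z1 : Set α) S := dWc.mono hiZ1W hSYW
  have d_jS_X : Disjoint ({Yj} ∪ S : Set α) X := dX _ (hjSYW.trans hYWY)
  have d_j_X : Disjoint ({Yj} : Set α) X := dX _ (hjYW'.trans hYWY)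
  have d_i_X : Disjoint ({Yi} : Set α) X := dX _ (hiW'.trans hWY)
  have d_Z1_X : Disjoint Z1 X := dX _ ((hZ1W.trans hWY))
  have d_Z2_X : Disjoint Z2 X := dX _ (hZ2YW.trans hYWY)
  have d_S_X : Disjoint S X := dX _ (hSYW.trans hYWY)
  have d_R_X : Disjoint R X := dX _ (hRW.trans hWY)
  have d_ij : Disjoint ({Yi} : Set α) ({Yj} : Set α) := by
    simp [hne]
  have d_j_Z1 : Disjoint ({Yj} : Set α) Z1 := dWc.symm.mono hjYW' hZ1W
  have d_j_XZ2 : Disjoint ({Yj} : Set α) (X ∪ Z2) := d_j_X.union_right d_j_Z2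
  have d_iZ1_XZ2 : Disjoint ({Yi} ∪ Z1 : Set α) (X ∪ Z2) :=
    d_iZ1_X.union_right d_iZ1_Z2
  have d_XZ2_S : Disjoint (X ∪ Z2) S := (d_S_X.symm).union_left d_Z2_S
  have d_XZ2_Z1 : Disjoint (X ∪ Z2) Z1 :=
    (d_Z1_X.symm).union_left (dWc.symm.mono hZ2YW hZ1W)
  have d_i_XZ2 : Disjoint ({Yi} : Set α) (X ∪ Z2) :=
    d_iZ1_XZ2.mono_left subset_union_left
  -- the derivation
  have s1 : G.ci (Y \ W) W X := G.symm dWc (dX W hWY) (dX _ hYWY) hci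
  nth_rewrite 2 [← eW] at s1
  have s2 : G.ci (Y \ W) ({Yi} ∪ Z1) X :=
    G.decomposition d_YW_iZ1 (dX _ hYWY) (dWc.symm.mono_right hRW)
      d_iZ1_X d_iZ1_R d_R_X.symm s1
  have s3 : G.ci ({Yi} ∪ Z1) (Y \ W) X :=
    G.symm d_YW_iZ1 (dX _ hYWY) d_iZ1_X s2
  rw [← eYW] at s3
  have s4 : G.ci ({Yi} ∪ Z1) ({Yj} ∪ S) (X ∪ Z2) :=
    G.weakUnion d_iZ1_jS d_iZ1_X d_iZ1_Z2 d_jS_X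
      (d_j_Z2.union_left d_Z2_S.symm) d_Z2_X.symm s3
  have s5 : G.ci ({Yi} ∪ Z1) {Yj} (X ∪ Z2) :=
    G.decomposition (d_iZ1_jS.mono_right subset_union_left) d_iZ1_XZ2 d_iZ1_S
      d_j_XZ2 d_j_S d_XZ2_S s4
  have s6 : G.ci {Yj} ({Yi} ∪ Z1) (X ∪ Z2) :=
    G.symm (d_iZ1_jS.mono_right subset_union_left) d_iZ1_XZ2 d_j_XZ2 s5
  have s7 : G.ci {Yj} {Yi} ((X ∪ Z2) ∪ Z1) :=
    G.weakUnion d_ij.symm d_j_XZ2 d_j_Z1 d_i_XZ2 d_i_Z1 d_XZ2_Z1 s6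
  have s8 : G.ci {Yi} {Yj} ((X ∪ Z2) ∪ Z1) :=
    G.symm d_ij.symm (d_j_XZ2.union_right d_j_Z1) (d_i_XZ2.union_right d_i_Z1) s7
  rwa [eZ] at s8

lemma lp_inter {α : Type*} (G : Semigraphoid α) (X Y : Set α) (hXY : Disjoint X Y)
    (W1 W2 : Set α) (h1 : IsLP G X Y W1) (h2 : IsLP G X Y W2) :
    IsLP G X Y (W1 ∩ W2) := by
  obtain ⟨h1Y, h1c⟩ := h1
  obtain ⟨h2Y, h2c⟩ := h2
  set A := W1 ∩ W2 with hA
  set B := W1 \ W2 with hB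
  set C := W2 \ W1 with hC
  set D := Y \ (W1 ∪ W2) with hD
  have dX : ∀ T ⊆ Y, Disjoint T X := fun T hT => (hXY.mono_right hT).symm
  have hAY : A ⊆ Y := (inter_subset_left).trans h1Y
  have hBY : B ⊆ Y := (diff_subset).trans h1Y
  have hCY : C ⊆ Y := (diff_subset).trans h2Y
  have hDY : D ⊆ Y := diff_subset
  have dAB : Disjoint A B := Set.disjoint_left.mpr fun x hx hx' => hx'.2 hx.2
  have dAC : Disjoint A C := Set.disjoint_left.mpr fun x hx hx' => hx'.2 hx.1
  have dAD : Disjoint A D := Set.disjoint_left.mpr fun x hx hx' => hx'.2 (Or.inl hx.1)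
  have dBC : Disjoint B C := Set.disjoint_left.mpr fun x hx hx' => hx'.2 hx.1
  have dBD : Disjoint B D := Set.disjoint_left.mpr fun x hx hx' => hx'.2 (Or.inl hx.1)
  have dCD : Disjoint C D := Set.disjoint_left.mpr fun x hx hx' => hx'.2 (Or.inr hx.1)
  have eq1 : W1 = A ∪ B := (inter_union_diff W1 W2).symm
  have eq1' : Y \ W1 = C ∪ D := by
    ext x
    simp only [hC, hD, mem_diff, mem_union]
    constructor
    · rintro ⟨hxY, hx1⟩
      by_cases hx2 : x ∈ W2
      · exact Or.inl ⟨hx2, hx1⟩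
      · exact Or.inr ⟨hxY, fun h => h.elim hx1 hx2⟩
    · rintro (⟨hx2, hx1⟩ | ⟨hxY, hx12⟩)
      · exact ⟨h2Y hx2, hx1⟩
      · exact ⟨hxY, fun h => hx12 (Or.inl h)⟩
  have eq2 : W2 = A ∪ C := by rw [hA, hC, inter_comm]; exact (inter_union_diff W2 W1).symm
  have eq2' : Y \ W2 = B ∪ D := by
    ext x
    simp only [hB, hD, mem_diff, mem_union]
    constructor
    · rintro ⟨hxY, hx2⟩
      by_cases hx1 : x ∈ W1
      · exact Or.inl ⟨hx1, hx2⟩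
      · exact Or.inr ⟨hxY, fun h => h.elim hx1 hx2⟩
    · rintro (⟨hx1, hx2⟩ | ⟨hxY, hx12⟩)
      · exact ⟨h1Y hx1, hx2⟩
      · exact ⟨hxY, fun h => hx12 (Or.inr h)⟩
  have eqA : Y \ A = (C ∪ D) ∪ B := by
    ext x
    simp only [hA, hB, hC, hD, mem_diff, mem_union, mem_inter_iff]
    constructor
    · rintro ⟨hxY, hx⟩
      by_cases hx1 : x ∈ W1
      · exact Or.inr ⟨hx1, fun h2 => hx ⟨hx1, h2⟩⟩
      · by_cases hx2 : x ∈ W2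
        · exact Or.inl (Or.inl ⟨hx2, hx1⟩)
        · exact Or.inl (Or.inr ⟨hxY, fun h => h.elim hx1 hx2⟩)
    · rintro ((⟨hx2, hx1⟩ | ⟨hxY, hx12⟩) | ⟨hx1, hx2⟩)
      · exact ⟨h2Y hx2, fun h => hx1 h.1⟩
      · exact ⟨hxY, fun h => hx12 (Or.inl h.1)⟩
      · exact ⟨h1Y hx1, fun h => hx2 h.2⟩
  have c1 := h1c
  rw [eq1', eq1] at c1
  have dABX : Disjoint (A ∪ B) X := dX _ (union_subset hAY hBY)
  have dCDX : Disjoint (C ∪ D) X := dX _ (union_subset hCY hDY)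
  have dAB_CD : Disjoint (A ∪ B) (C ∪ D) :=
    (dAC.union_right dAD).union_left (dBC.union_right dBD)
  have c2 : G.ci (C ∪ D) (A ∪ B) X := G.symm dAB_CD dABX dCDX c1
  have dCD_A : Disjoint (C ∪ D) A := (dAC.symm).union_left dAD.symm
  have dCD_B : Disjoint (C ∪ D) B := (dBC.symm).union_left dBD.symm
  have dAX : Disjoint A X := dX _ hAY
  have dBX : Disjoint B X := dX _ hBY
  have c3 : G.ci (C ∪ D) A (X ∪ B) :=
    G.weakUnion dCD_A dCDX dCD_B dAX dAB dBX.symm c2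
  have c4 : G.ci A (C ∪ D) (X ∪ B) :=
    G.symm dCD_A (dCDX.union_right dCD_B) (dAX.union_right dAB) c3
  have c5 := h2c
  rw [eq2', eq2] at c5
  have dAC_BD : Disjoint (A ∪ C) (B ∪ D) :=
    (dAB.union_right dAD).union_left (dBC.symm.union_right dCD)
  have dACX : Disjoint (A ∪ C) X := dX _ (union_subset hAY hCY)
  have dBDX : Disjoint (B ∪ D) X := dX _ (union_subset hBY hDY)
  have c6 : G.ci (B ∪ D) (A ∪ C) X := G.symm dAC_BD dACX dBDX c5
  have dBD_A : Disjoint (B ∪ D) A := (dAB.symm).union_left dAD.symm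
  have dBD_C : Disjoint (B ∪ D) C := dBC.union_left dCD.symm
  have dCX : Disjoint C X := dX _ hCY
  have c7 : G.ci (B ∪ D) A X :=
    G.decomposition dBD_A dBDX dBD_C dAX dAC dCX.symm c6
  have c8 : G.ci A (B ∪ D) X := G.symm dBD_A dBDX dAX c7
  have dDX : Disjoint D X := dX _ hDY
  have c9 : G.ci A B X :=
    G.decomposition dAB dAX dAD dBX dBD dDX.symm c8
  have dA_CD : Disjoint A (C ∪ D) := dAC.union_right dAD
  have c10 : G.ci A ((C ∪ D) ∪ B) X :=
    G.contraction dA_CD dAX dAB dCDX dCD_B dBX.symm c4 c9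
  exact ⟨hAY, by rw [eqA]; exact c10⟩

/-- If two distinct labels are conditionally dependent given `X` together with some
subset of the remaining labels, then every label powerset containing one contains
the other; consequently their minimal label powersets coincide. -/
theorem dependent_labels_same_minimal_powerset {α : Type*} (G : Semigraphoid α)
    (X Y : Set α) (hXY : Disjoint X Y) (Yi Yj : α)
    (hYi : Yi ∈ Y) (hYj : Yj ∈ Y) (hne : Yi ≠ Yj)
    (hdep : ∃ Z ⊆ Y \ {Yi, Yj}, ¬ G.ci {Yi} {Yj} (X ∪ Z)) :
    (∀ W, IsLP G X Y W → Yi ∈ W → Yj ∈ W) ∧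
    (∀ W1 W2, IsMinLP G X Y W1 → IsMinLP G X Y W2 → Yi ∈ W1 → Yj ∈ W2 →
      W1 = W2) := by
  obtain ⟨Z, hZ, hno⟩ := hdep
  have hZY : Z ⊆ Y := hZ.trans diff_subset
  have hZi : Yi ∉ Z := fun h => (hZ h).2 (by simp)
  have hZj : Yj ∉ Z := fun h => (hZ h).2 (by simp)
  have d_i_XZ : Disjoint ({Yi} : Set α) (X ∪ Z) := by
    refine (disjoint_singleton_left.mpr ?_).union_right (disjoint_singleton_left.mpr hZi)
    exact fun h => hXY.subset_compl_left hYi h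
  have d_j_XZ : Disjoint ({Yj} : Set α) (X ∪ Z) := by
    refine (disjoint_singleton_left.mpr ?_).union_right (disjoint_singleton_left.mpr hZj)
    exact fun h => hXY.subset_compl_left hYj h
  have d_ij : Disjoint ({Yi} : Set α) ({Yj} : Set α) := by simp [hne]
  have part1 : ∀ W, IsLP G X Y W → Yi ∈ W → Yj ∈ W := by
    intro W hW hiW
    by_contra hjW
    exact hno (key_ci G X Y hXY Yi Yj hYi hYj hne W hW hiW hjW Z hZ)
  have part1' : ∀ W, IsLP G X Y W → Yj ∈ W → Yi ∈ W := by
    intro W hW hjW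
    by_contra hiW
    have hZ' : Z ⊆ Y \ {Yj, Yi} := by rwa [Set.pair_comm Yj Yi]
    have h := key_ci G X Y hXY Yj Yi hYj hYi hne.symm W hW hjW hiW Z hZ'
    exact hno (G.symm d_ij.symm d_j_XZ d_i_XZ h)
  refine ⟨part1, ?_⟩
  intro W1 W2 h1 h2 hi1 hj2
  have hi2 : Yi ∈ W2 := part1' W2 h2.1 hj2
  have hI := lp_inter G X Y hXY W1 W2 h1.1 h2.1
  have hIne : (W1 ∩ W2).Nonempty := ⟨Yi, hi1, hi2⟩
  have e1 := h1.2.2 (W1 ∩ W2) inter_subset_left hIne hI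
  have e2 := h2.2.2 (W1 ∩ W2) inter_subset_right hIne hI
  exact e1.symm.trans e2
end

section
/- If Y_LP is a minimal label powerset and the distribution additionally satisfies the Composition property, then for every nonempty proper subset Z of Y_LP, Z is conditionally dependent on Y_LP \ Z given X. -/
open Set

/-- If the distribution additionally satisfies the Composition property, then a
minimal label powerset cannot be split: every nonempty proper subset `Z` of a
minimal label powerset `W` is conditionally dependent on `W \ Z` given `X`. -/
theorem minimal_label_powerset_no_split {α : Type*} (G : Semigraphoid α)
    (hcomp : ∀ ⦃A B C D : Set α⦄, Disjoint A B → Disjoint A C → Disjoint A D →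
      Disjoint B C → Disjoint B D → Disjoint C D →
      G.ci A B C → G.ci A D C → G.ci A (B ∪ D) C)
    (X Y : Set α) (hXY : Disjoint X Y) (W : Set α) (hW : IsMinLP G X Y W)
    (Z : Set α) (hZW : Z ⊂ W) (hZne : Z.Nonempty) :
    ¬ G.ci Z (W \ Z) X := by
  intro hci
  obtain ⟨⟨hWY, hWci⟩, hWne, hmin⟩ := hW
  obtain ⟨hZW', hne⟩ := hZW
  have hZY : Z ⊆ Y := hZW'.trans hWY
  -- disjointness facts
  have dXZ : Disjoint Z X := hXY.symm.mono_left hZY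
  have dXW : Disjoint W X := hXY.symm.mono_left hWY
  have dXWZ : Disjoint (W \ Z) X := dXW.mono_left (diff_subset)
  have dXYW : Disjoint (Y \ W) X := hXY.symm.mono_left (diff_subset)
  have dWYW : Disjoint W (Y \ W) := disjoint_sdiff_right
  have dZWZ : Disjoint Z (W \ Z) := disjoint_sdiff_right
  have dZYW : Disjoint Z (Y \ W) := dWYW.mono_left hZW'
  have dWZYW : Disjoint (W \ Z) (Y \ W) := dWYW.mono_left (diff_subset)
  -- from W ci (Y\W) X derive Z ci (Y\W) X
  have h1 : G.ci (Y \ W) W X := G.symm dWYW dXW dXYW hWci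
  have h1' : G.ci (Y \ W) (Z ∪ (W \ Z)) X := by
    rw [Set.union_diff_cancel hZW']; exact h1
  have h2 : G.ci (Y \ W) Z X :=
    G.decomposition dZYW.symm dXYW dWZYW.symm dXZ dZWZ dXWZ.symm h1'
  have h3 : G.ci Z (Y \ W) X := G.symm dZYW.symm dXYW dXZ h2
  -- composition
  have h4 : G.ci Z ((W \ Z) ∪ (Y \ W)) X :=
    hcomp dZWZ dXZ dZYW dXWZ dWZYW dXYW.symm hci h3
  have heq : (W \ Z) ∪ (Y \ W) = Y \ Z := by
    rw [Set.union_comm, Set.diff_union_diff_cancel hWY hZW']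
  rw [heq] at h4
  exact hne (le_of_eq (hmin Z hZW' hZne ⟨hZY, h4⟩).symm)
end

section
/- Under the graphoid axioms including Intersection: if M1 is a Markov blanket of Y1 in U and M2 is a Markov blanket of Y2 in U (Y1, Y2 distinct single variables), then (M1 \ {Y1, Y2}) ∪ (M2 \ {Y1, Y2}) is a Markov blanket of {Y1, Y2} in U. -/
open Set

set_option maxHeartbeats 2000000

/-- An abstract conditional independence relation satisfying the graphoid axioms
(Symmetry, Decomposition, Weak Union, Contraction and Intersection), each stated
for mutually disjoint subsets. -/
structure Graphoid (α : Type*) where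
  ci : Set α → Set α → Set α → Prop
  symm : ∀ ⦃A B C : Set α⦄, Disjoint A B → Disjoint A C → Disjoint B C →
    ci A B C → ci B A C
  decomposition : ∀ ⦃A B C D : Set α⦄, Disjoint A B → Disjoint A C → Disjoint A D →
    Disjoint B C → Disjoint B D → Disjoint C D →
    ci A (B ∪ D) C → ci A B C
  weakUnion : ∀ ⦃A B C D : Set α⦄, Disjoint A B → Disjoint A C → Disjoint A D →
    Disjoint B C → Disjoint B D → Disjoint C D →
    ci A (B ∪ D) C → ci A B (C ∪ D)
  contraction : ∀ ⦃A B C D : Set α⦄, Disjoint A B → Disjoint A C → Disjoint A D →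
    Disjoint B C → Disjoint B D → Disjoint C D →
    ci A B (C ∪ D) → ci A D C → ci A (B ∪ D) C
  intersection : ∀ ⦃A B C D : Set α⦄, Disjoint A B → Disjoint A C → Disjoint A D →
    Disjoint B C → Disjoint B D → Disjoint C D →
    ci A B (C ∪ D) → ci A D (C ∪ B) → ci A (B ∪ D) C

/-- `M` is a Markov blanket of `T` in `U`. -/
def IsMBlanket {α : Type*} (G : Graphoid α) (U T M : Set α) : Prop :=
  M ⊆ U \ T ∧ G.ci T (U \ (T ∪ M)) M

/-- If `M1` and `M2` are Markov blankets in `U` of the single variables `Y1` and `Y2`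
respectively, then `(M1 \ {Y1, Y2}) ∪ (M2 \ {Y1, Y2})` is a Markov blanket of
`{Y1, Y2}` in `U`. -/
theorem union_markov_blankets_pair {α : Type*} (G : Graphoid α)
    (U : Set α) (Y1 Y2 : α) (hY1 : Y1 ∈ U) (hY2 : Y2 ∈ U) (hne : Y1 ≠ Y2)
    (M1 M2 : Set α)
    (hM1 : IsMBlanket G U {Y1} M1) (hM2 : IsMBlanket G U {Y2} M2) :
    IsMBlanket G U {Y1, Y2} ((M1 \ {Y1, Y2}) ∪ (M2 \ {Y1, Y2})) := by
  obtain ⟨hM1sub, hci1⟩ := hM1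
  obtain ⟨hM2sub, hci2⟩ := hM2
  set T : Set α := {Y1, Y2} with hT
  set M : Set α := (M1 \ T) ∪ (M2 \ T) with hM
  set R : Set α := U \ (T ∪ M) with hR
  set D1 : Set α := (M ∪ {Y2}) \ M1 with hD1
  set D2 : Set α := (M ∪ {Y1}) \ M2 with hD2
  have h1U : ∀ x, x ∈ M1 → x ∈ U := fun x hx => (hM1sub hx).1
  have h2U : ∀ x, x ∈ M2 → x ∈ U := fun x hx => (hM2sub hx).1
  have h1Y1 : ∀ x, x ∈ M1 → ¬ x = Y1 := fun x hx h => (hM1sub hx).2 (by simp [h])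
  have h2Y2 : ∀ x, x ∈ M2 → ¬ x = Y2 := fun x hx h => (hM2sub hx).2 (by simp [h])
  simp only [hT, hM, hR, hD1, hD2] at *
  clear hT hM hR hD1 hD2
  have e1 : U \ ({Y1} ∪ M1)
      = (U \ (({Y1, Y2} : Set α) ∪ ((M1 \ {Y1, Y2}) ∪ (M2 \ {Y1, Y2}))))
        ∪ ((((M1 \ {Y1, Y2}) ∪ (M2 \ {Y1, Y2})) ∪ {Y2}) \ M1) := by
    ext x
    have a1 := h1U x; have a2 := h2U x; have b1 := h1Y1 x; have b2 := h2Y2 x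
    have c2 : x = Y2 → x ∈ U := fun h => h ▸ hY2
    have cne : x = Y1 → x = Y2 → False := fun h h' => hne (h.symm.trans h')
    simp only [mem_diff, mem_union, mem_singleton_iff, mem_insert_iff]
    tauto
  have e1' : M1 ∪ ((((M1 \ {Y1, Y2}) ∪ (M2 \ {Y1, Y2})) ∪ {Y2}) \ M1)
      = ((M1 \ {Y1, Y2}) ∪ (M2 \ {Y1, Y2})) ∪ {Y2} := by
    ext x
    have b1 := h1Y1 x
    simp only [mem_diff, mem_union, mem_singleton_iff, mem_insert_iff]
    tauto
  have e2 : U \ ({Y2} ∪ M2)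
      = (U \ (({Y1, Y2} : Set α) ∪ ((M1 \ {Y1, Y2}) ∪ (M2 \ {Y1, Y2}))))
        ∪ ((((M1 \ {Y1, Y2}) ∪ (M2 \ {Y1, Y2})) ∪ {Y1}) \ M2) := by
    ext x
    have a1 := h1U x; have a2 := h2U x; have b1 := h1Y1 x; have b2 := h2Y2 x
    have c1 : x = Y1 → x ∈ U := fun h => h ▸ hY1
    have cne : x = Y1 → x = Y2 → False := fun h h' => hne (h.symm.trans h')
    simp only [mem_diff, mem_union, mem_singleton_iff, mem_insert_iff]
    tauto
  have e2' : M2 ∪ ((((M1 \ {Y1, Y2}) ∪ (M2 \ {Y1, Y2})) ∪ {Y1}) \ M2)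
      = ((M1 \ {Y1, Y2}) ∪ (M2 \ {Y1, Y2})) ∪ {Y1} := by
    ext x
    have b2 := h2Y2 x
    simp only [mem_diff, mem_union, mem_singleton_iff, mem_insert_iff]
    tauto
  -- disjointness facts
  have dis : ∀ A B : Set α, (∀ x, x ∈ A → x ∈ B → False) → Disjoint A B :=
    fun A B h => Set.disjoint_left.mpr h
  set M' : Set α := (M1 \ {Y1, Y2}) ∪ (M2 \ {Y1, Y2}) with hM'
  set R' : Set α := U \ (({Y1, Y2} : Set α) ∪ M') with hR'
  set E1 : Set α := (M' ∪ {Y2}) \ M1 with hE1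
  set E2 : Set α := (M' ∪ {Y1}) \ M2 with hE2
  have memM' : ∀ x, x ∈ M' → (¬ x = Y1 ∧ ¬ x = Y2) := by
    intro x hx
    rcases hx with hx | hx <;>
      · have := hx.2
        simp only [mem_insert_iff, mem_singleton_iff] at this
        push_neg at this
        exact this
  have memR' : ∀ x, x ∈ R' → (¬ x = Y1 ∧ ¬ x = Y2 ∧ x ∉ M') := by
    intro x hx
    have := hx.2
    simp only [mem_union, mem_insert_iff, mem_singleton_iff] at this
    push_neg at this
    exact ⟨this.1.1, this.1.2, this.2⟩
  have dY1R : Disjoint ({Y1} : Set α) R' := by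
    refine dis _ _ fun x hx hx' => ?_
    rw [mem_singleton_iff] at hx
    exact (memR' x hx').1 hx
  have dY2R : Disjoint ({Y2} : Set α) R' := by
    refine dis _ _ fun x hx hx' => ?_
    rw [mem_singleton_iff] at hx
    exact (memR' x hx').2.1 hx
  have dY1M1 : Disjoint ({Y1} : Set α) M1 := by
    refine dis _ _ fun x hx hx' => ?_
    rw [mem_singleton_iff] at hx
    exact h1Y1 x hx' hx
  have dY2M2 : Disjoint ({Y2} : Set α) M2 := by
    refine dis _ _ fun x hx hx' => ?_
    rw [mem_singleton_iff] at hx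
    exact h2Y2 x hx' hx
  have dY1M' : Disjoint ({Y1} : Set α) M' := by
    refine dis _ _ fun x hx hx' => ?_
    rw [mem_singleton_iff] at hx
    exact (memM' x hx').1 hx
  have dY2M' : Disjoint ({Y2} : Set α) M' := by
    refine dis _ _ fun x hx hx' => ?_
    rw [mem_singleton_iff] at hx
    exact (memM' x hx').2 hx
  have dY1E1 : Disjoint ({Y1} : Set α) E1 := by
    refine dis _ _ fun x hx hx' => ?_
    rw [mem_singleton_iff] at hx
    rcases hx'.1 with h | h
    · exact (memM' x h).1 hx
    · rw [mem_singleton_iff] at h; exact hne (hx.symm.trans h)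
  have dY2E2 : Disjoint ({Y2} : Set α) E2 := by
    refine dis _ _ fun x hx hx' => ?_
    rw [mem_singleton_iff] at hx
    rcases hx'.1 with h | h
    · exact (memM' x h).2 hx
    · rw [mem_singleton_iff] at h; exact hne (h.symm.trans hx)
  have dRM1 : Disjoint R' M1 := by
    refine dis _ _ fun x hx hx' => ?_
    have h := memR' x hx
    by_cases h2 : x = Y2
    · exact h.2.1 h2
    · exact h.2.2 (Or.inl ⟨hx', by simp [h.1, h2]⟩)
  have dRM2 : Disjoint R' M2 := by
    refine dis _ _ fun x hx hx' => ?_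
    have h := memR' x hx
    by_cases h1 : x = Y1
    · exact h.1 h1
    · exact h.2.2 (Or.inr ⟨hx', by simp [h1, h.2.1]⟩)
  have dRM' : Disjoint R' M' := by
    refine dis _ _ fun x hx hx' => (memR' x hx).2.2 hx'
  have dRE1 : Disjoint R' E1 := by
    refine dis _ _ fun x hx hx' => ?_
    have h := memR' x hx
    rcases hx'.1 with hm | hm
    · exact h.2.2 hm
    · exact h.2.1 hm
  have dRE2 : Disjoint R' E2 := by
    refine dis _ _ fun x hx hx' => ?_
    have h := memR' x hx
    rcases hx'.1 with hm | hm
    · exact h.2.2 hm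
    · exact h.1 hm
  have dM1E1 : Disjoint M1 E1 := by
    refine dis _ _ fun x hx hx' => hx'.2 hx
  have dM2E2 : Disjoint M2 E2 := by
    refine dis _ _ fun x hx hx' => hx'.2 hx
  have dY1Y2 : Disjoint ({Y1} : Set α) ({Y2} : Set α) := by
    refine dis _ _ fun x hx hx' => ?_
    rw [mem_singleton_iff] at hx hx'
    exact hne (hx ▸ hx')
  have dRMY2 : Disjoint R' (M' ∪ {Y2}) := by
    refine Set.disjoint_union_right.mpr ⟨dRM', dY2R.symm⟩
  have dRMY1 : Disjoint R' (M' ∪ {Y1}) := by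
    refine Set.disjoint_union_right.mpr ⟨dRM', dY1R.symm⟩
  have dY1MY2 : Disjoint ({Y1} : Set α) (M' ∪ {Y2}) :=
    Set.disjoint_union_right.mpr ⟨dY1M', dY1Y2⟩
  have dY2MY1 : Disjoint ({Y2} : Set α) (M' ∪ {Y1}) :=
    Set.disjoint_union_right.mpr ⟨dY2M', dY1Y2.symm⟩
  -- step 1: Y1 ⊥ R' | M' ∪ {Y2}
  rw [e1] at hci1
  have s1 : G.ci {Y1} R' (M1 ∪ E1) :=
    G.weakUnion dY1R dY1M1 dY1E1 dRM1 dRE1 dM1E1 hci1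
  rw [e1'] at s1
  -- step 2 : Y2 ⊥ R' | M' ∪ {Y1}
  rw [e2] at hci2
  have s2 : G.ci {Y2} R' (M2 ∪ E2) :=
    G.weakUnion dY2R dY2M2 dY2E2 dRM2 dRE2 dM2E2 hci2
  rw [e2'] at s2
  -- symmetrize
  have s1' : G.ci R' {Y1} (M' ∪ {Y2}) :=
    G.symm dY1R dY1MY2 dRMY2 s1
  have s2' : G.ci R' {Y2} (M' ∪ {Y1}) :=
    G.symm dY2R dY2MY1 dRMY1 s2
  -- intersection
  have s3 : G.ci R' ({Y1} ∪ {Y2}) M' :=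
    G.intersection dY1R.symm dRM' dY2R.symm dY1M' dY1Y2 dY2M'.symm s1' s2'
  rw [Set.singleton_union] at s3
  have dTR : Disjoint R' ({Y1, Y2} : Set α) := by
    refine dis _ _ fun x hx hx' => ?_
    have h := memR' x hx
    rcases hx' with h1 | h2
    · exact h.1 h1
    · exact h.2.1 h2
  have dTM : Disjoint ({Y1, Y2} : Set α) M' := by
    refine dis _ _ fun x hx hx' => ?_
    rcases hx with h1 | h2
    · exact (memM' x hx').1 h1
    · exact (memM' x hx').2 h2
  constructor
  · intro x hx
    rcases hx with h | h
    · exact ⟨h1U x h.1, h.2⟩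
    · exact ⟨h2U x h.1, h.2⟩
  · exact G.symm dTR dRM' dTM s3
end

section
/- Let Y_LP ⊆ Y be a label powerset and M its Markov boundary in U = X ∪ Y, with U satisfying the graphoid axioms including Intersection. Then M ∩ Y = ∅, i.e., the Markov boundary of a label powerset contains no label variables. -/
open Set

def IsMBoundary {α : Type*} (G : Graphoid α) (U T M : Set α) : Prop :=
  IsMBlanket G U T M ∧ ∀ M' ⊂ M, ¬ IsMBlanket G U T M'

/-- The Markov boundary in `U = X ∪ Y` of a label powerset contains no label
variables. -/
theorem markov_boundary_of_powerset_no_labels {α : Type*} (G : Graphoid α)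
    (X Y : Set α) (hXY : Disjoint X Y) (Z : Set α) (hZY : Z ⊆ Y)
    (hLP : G.ci Z (Y \ Z) X) (M : Set α)
    (hbnd : IsMBoundary G (X ∪ Y) Z M) :
    M ∩ Y = ∅ := by
  obtain ⟨⟨hMsub, hci⟩, hmin⟩ := hbnd
  set U := X ∪ Y with hU
  set W := M ∩ Y with hW
  set M' := M \ Y with hM'
  set R := U \ (Z ∪ M) with hR
  have hMZ : Disjoint M Z := by
    rw [Set.disjoint_left]; intro a ha; exact (hMsub ha).2
  -- basic disjointness facts
  have hZW : Disjoint Z W := by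
    rw [Set.disjoint_left]; intro a ha hw; exact (hMsub hw.1).2 ha
  have hZX : Disjoint Z X := (hXY.symm.mono_left hZY)
  have dZM' : Disjoint Z M' := by
    rw [Set.disjoint_left]; intro a ha hm; exact (hMsub hm.1).2 ha
  have dZR : Disjoint Z R := by
    rw [Set.disjoint_left]; intro a ha hr; exact hr.2 (Or.inl ha)
  have dRM' : Disjoint R M' := by
    rw [Set.disjoint_left]; intro a ha hm; exact ha.2 (Or.inr hm.1)
  have dRW : Disjoint R W := by
    rw [Set.disjoint_left]; intro a ha hw; exact ha.2 (Or.inr hw.1)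
  have dM'W : Disjoint M' W := by
    rw [Set.disjoint_left]; intro a ha hw; exact ha.2 hw.2
  -- Step 1: from hLP, weak union to get ci Z W (U \ (Z ∪ W))
  set D : Set α := (Y \ Z) \ W with hD
  have hWD : W ∪ D = Y \ Z := by
    apply Set.union_diff_cancel
    intro a ha; exact ⟨ha.2, (hMsub ha.1).2⟩
  have dZD : Disjoint Z D := by
    rw [Set.disjoint_left]; intro a ha hd; exact hd.1.2 ha
  have dWX : Disjoint W X := by
    rw [Set.disjoint_left]; intro a ha hx; exact Set.disjoint_left.mp hXY hx ha.2
  have dWD : Disjoint W D := by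
    rw [Set.disjoint_left]; intro a ha hd; exact hd.2 ha
  have dXD : Disjoint X D := by
    rw [Set.disjoint_left]; intro a ha hd; exact hXY.subset_compl_right ha hd.1.1
  have h1 : G.ci Z W (X ∪ D) :=
    G.weakUnion hZW hZX dZD dWX dWD dXD (by rw [hWD]; exact hLP)
  have hXD : X ∪ D = U \ (Z ∪ W) := by
    ext a
    constructor
    · rintro (hx | hd)
      · exact ⟨Or.inl hx, by
          rintro (hz | hw)
          · exact hXY.subset_compl_right hx (hZY hz)
          · exact hXY.subset_compl_right hx hw.2⟩
      · exact ⟨Or.inr hd.1.1, by rintro (hz | hw); exacts [hd.1.2 hz, hd.2 hw]⟩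
    · rintro ⟨(hx | hy), hn⟩
      · exact Or.inl hx
      · exact Or.inr ⟨⟨hy, fun hz => hn (Or.inl hz)⟩, fun hw => hn (Or.inr hw)⟩
  have hM'R : M' ∪ R = U \ (Z ∪ W) := by
    ext a
    constructor
    · rintro (hm | hr)
      · refine ⟨(hMsub hm.1).1, ?_⟩
        rintro (hz | hw); exacts [(hMsub hm.1).2 hz, hm.2 hw.2]
      · exact ⟨hr.1, by rintro (hz | hw); exacts [hr.2 (Or.inl hz), hr.2 (Or.inr hw.1)]⟩
    · rintro ⟨hu, hn⟩
      by_cases hm : a ∈ M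
      · left
        refine ⟨hm, fun hy => hn (Or.inr ⟨hm, hy⟩)⟩
      · right
        exact ⟨hu, by rintro (hz | hM); exacts [hn (Or.inl hz), hm hM]⟩
  have h2 : G.ci Z W (M' ∪ R) := by rw [hM'R, ← hXD]; exact h1
  -- Step 2: blanket condition, rewritten
  have hM'W : M' ∪ W = M := by
    ext a; constructor
    · rintro (hm | hw); exacts [hm.1, hw.1]
    · intro hm; by_cases hy : a ∈ Y
      · exact Or.inr ⟨hm, hy⟩
      · exact Or.inl ⟨hm, hy⟩
  have h3 : G.ci Z R (M' ∪ W) := by rw [hM'W]; exact hci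
  -- Step 3: intersection
  have h4 : G.ci Z (R ∪ W) M' := G.intersection dZR dZM' hZW dRM' dRW dM'W h3 h2
  have hRW : R ∪ W = U \ (Z ∪ M') := by
    ext a; constructor
    · rintro (hr | hw)
      · exact ⟨hr.1, by rintro (hz | hm); exacts [hr.2 (Or.inl hz), hr.2 (Or.inr hm.1)]⟩
      · refine ⟨Or.inr hw.2, ?_⟩
        rintro (hz | hm); exacts [(hMsub hw.1).2 hz, hm.2 hw.2]
    · rintro ⟨hu, hn⟩
      by_cases hm : a ∈ M
      · right
        by_cases hy : a ∈ Y
        · exact ⟨hm, hy⟩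
        · exact absurd (Or.inr ⟨hm, hy⟩) hn
      · left
        exact ⟨hu, by rintro (hz | hM); exacts [hn (Or.inl hz), hm hM]⟩
  have hblanket : IsMBlanket G U Z M' := by
    refine ⟨fun a ha => hMsub ha.1, ?_⟩
    rw [← hRW]; exact h4
  by_contra hne
  have hWne : W.Nonempty := Set.nonempty_iff_ne_empty.mpr hne
  have hss : M' ⊂ M := by
    constructor
    · exact Set.diff_subset
    · intro hsub
      obtain ⟨a, ha⟩ := hWne
      exact (hsub ha.1).2 ha.2
  exact hmin M' hss hblanket
end

section
/- For any strictly positive probability distribution on a product of finite types, conditional independence satisfies the Intersection property: if X ⊥ Y | (Z ∪ W) and X ⊥ W | (Z ∪ Y), then X ⊥ (Y ∪ W) | Z. -/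
open scoped NNReal

/-- Conditional independence of the first and second components given the third,
for a joint distribution `p` on a finite product: the cross-multiplied form of
`p(a, b | c) = p(a | c) p(b | c)` for all `c` with `p(c) > 0`. -/
def CIfun {A B C : Type*} [Fintype A] [Fintype B] [Fintype C]
    (p : A × B × C → ℝ≥0) : Prop :=
  ∀ a b c, p (a, b, c) * (∑ x : A, ∑ y : B, p (x, y, c)) =
    (∑ y : B, p (a, y, c)) * (∑ x : A, p (x, b, c))

/-- Intersection: for a strictly positive probability distribution on a product of
finite types (groups `X, Y, Z, W` with values in `A, B, C, D`), if
`X ⊥ Y | (Z ∪ W)` and `X ⊥ W | (Z ∪ Y)`, then `X ⊥ (Y ∪ W) | Z`. -/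
theorem intersection_discrete {A B C D : Type*}
    [Fintype A] [Fintype B] [Fintype C] [Fintype D]
    (p : A × B × C × D → ℝ≥0) (hsum : ∑ w, p w = 1) (hpos : ∀ w, 0 < p w)
    (hXY_ZW : CIfun (fun x : A × B × (C × D) => p (x.1, x.2.1, x.2.2.1, x.2.2.2)))
    (hXW_ZY : CIfun (fun x : A × D × (C × B) => p (x.1, x.2.2.2, x.2.2.1, x.2.1))) :
    CIfun (fun x : A × (B × D) × C => p (x.1, x.2.1.1, x.2.2, x.2.1.2)) := by
  have hne : Nonempty (A × B × C × D) := by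
    by_contra h
    rw [not_nonempty_iff] at h
    simp at hsum
  obtain ⟨⟨a0, b0, c0, d0⟩⟩ := hne
  haveI : Nonempty A := ⟨a0⟩
  haveI : Nonempty B := ⟨b0⟩
  haveI : Nonempty D := ⟨d0⟩
  intro a bd c
  obtain ⟨b, d⟩ := bd
  dsimp only
  have hS : ∀ d : D, (0:ℝ≥0) < ∑ x : A, ∑ y : B, p (x, y, c, d) := fun d =>
    Finset.sum_pos (fun x _ => Finset.sum_pos (fun y _ => hpos _) Finset.univ_nonempty)
      Finset.univ_nonempty
  have hB : ∀ (b : B) (d : D), (0:ℝ≥0) < ∑ x : A, p (x, b, c, d) := fun b d =>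
    Finset.sum_pos (fun x _ => hpos _) Finset.univ_nonempty
  have h1 : ∀ (a : A) (b : B) (d : D), p (a, b, c, d) * (∑ x : A, ∑ y : B, p (x, y, c, d)) =
      (∑ y : B, p (a, y, c, d)) * (∑ x : A, p (x, b, c, d)) := fun a b d =>
    hXY_ZW a b (c, d)
  have h2 : ∀ (a : A) (b : B) (d : D), p (a, b, c, d) * (∑ x : A, ∑ w : D, p (x, b, c, w)) =
      (∑ w : D, p (a, b, c, w)) * (∑ x : A, p (x, b, c, d)) := fun a b d =>
    hXW_ZY a d (c, b)
  have key : ∀ (a : A) (b : B) (d : D),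
      (∑ y : B, p (a, y, c, d)) * (∑ x : A, ∑ w : D, p (x, b, c, w)) =
      (∑ w : D, p (a, b, c, w)) * (∑ x : A, ∑ y : B, p (x, y, c, d)) := by
    intro a b d
    have h3 : (∑ y : B, p (a, y, c, d)) * (∑ x : A, ∑ w : D, p (x, b, c, w)) *
          (∑ x : A, p (x, b, c, d)) =
        (∑ w : D, p (a, b, c, w)) * (∑ x : A, ∑ y : B, p (x, y, c, d)) *
          (∑ x : A, p (x, b, c, d)) := by
      calc (∑ y : B, p (a, y, c, d)) * (∑ x : A, ∑ w : D, p (x, b, c, w)) *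
            (∑ x : A, p (x, b, c, d))
          = (p (a, b, c, d) * (∑ x : A, ∑ y : B, p (x, y, c, d))) *
            (∑ x : A, ∑ w : D, p (x, b, c, w)) := by rw [h1 a b d]; ring
        _ = (p (a, b, c, d) * (∑ x : A, ∑ w : D, p (x, b, c, w))) *
            (∑ x : A, ∑ y : B, p (x, y, c, d)) := by ring
        _ = _ := by rw [h2 a b d]; ring
    exact mul_right_cancel₀ (hB b d).ne' h3
  have key2 : (∑ y : B, p (a, y, c, d)) * (∑ b : B, ∑ x : A, ∑ w : D, p (x, b, c, w)) =
      (∑ b : B, ∑ w : D, p (a, b, c, w)) * (∑ x : A, ∑ y : B, p (x, y, c, d)) := by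
    rw [Finset.mul_sum, Finset.sum_mul]
    exact Finset.sum_congr rfl fun b' _ => key a b' d
  have hN : (∑ x : A, ∑ yw : B × D, p (x, yw.1, c, yw.2)) =
      ∑ b : B, ∑ x : A, ∑ w : D, p (x, b, c, w) := by
    rw [Finset.sum_comm, Fintype.sum_prod_type]
    exact Finset.sum_congr rfl fun b' _ => Finset.sum_comm
  have hM : (∑ yw : B × D, p (a, yw.1, c, yw.2)) = ∑ b : B, ∑ w : D, p (a, b, c, w) :=
    by rw [Fintype.sum_prod_type]
  rw [hN, hM]
  apply mul_right_cancel₀ (hS d).ne'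
  calc p (a, b, c, d) * (∑ b : B, ∑ x : A, ∑ w : D, p (x, b, c, w)) *
        (∑ x : A, ∑ y : B, p (x, y, c, d))
      = (p (a, b, c, d) * (∑ x : A, ∑ y : B, p (x, y, c, d))) *
        (∑ b : B, ∑ x : A, ∑ w : D, p (x, b, c, w)) := by ring
    _ = (∑ y : B, p (a, y, c, d)) * (∑ x : A, p (x, b, c, d)) *
        (∑ b : B, ∑ x : A, ∑ w : D, p (x, b, c, w)) := by rw [h1 a b d]
    _ = ((∑ y : B, p (a, y, c, d)) * (∑ b : B, ∑ x : A, ∑ w : D, p (x, b, c, w))) *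
        (∑ x : A, p (x, b, c, d)) := by ring
    _ = ((∑ b : B, ∑ w : D, p (a, b, c, w)) * (∑ x : A, ∑ y : B, p (x, y, c, d))) *
        (∑ x : A, p (x, b, c, d)) := by rw [key2]
    _ = (∑ b : B, ∑ w : D, p (a, b, c, w)) * (∑ x : A, p (x, b, c, d)) *
        (∑ x : A, ∑ y : B, p (x, y, c, d)) := by ring
end

section
/- If the joint probability distribution on finitely many discrete variables is strictly positive (hence satisfies the Intersection property), then every variable T has a unique Markov boundary: the intersection of any two Markov blankets of T is again a Markov blanket of T, so there is a unique minimal one. -/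
open scoped NNReal

variable {ι : Type*} [Fintype ι] [DecidableEq ι]
variable {V : ι → Type*} [∀ i, Fintype (V i)] [∀ i, DecidableEq (V i)]

/-- Marginal probability that the variables indexed by `S` take the values given
by the configuration `f` (only the values of `f` on `S` matter). -/
def marg (p : (∀ i, V i) → ℝ≥0) (S : Finset ι) (f : ∀ i, V i) : ℝ≥0 :=
  ∑ g : ∀ i, V i, if ∀ i ∈ S, g i = f i then p g else 0

/-- Conditional independence of the variable sets `S` and `T` given `R` under the
joint distribution `p`, in cross-multiplied form:
`p(s, t, r) ⬝ p(r) = p(s, r) ⬝ p(t, r)` for all configurations. -/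
def CIset (p : (∀ i, V i) → ℝ≥0) (S T R : Finset ι) : Prop :=
  ∀ f : ∀ i, V i,
    marg p (S ∪ T ∪ R) f * marg p R f = marg p (S ∪ R) f * marg p (T ∪ R) f

/-- `M` is a Markov blanket of the variable `t` in `U` (the whole index set). -/
def MBlanket (p : (∀ i, V i) → ℝ≥0) (t : ι) (M : Finset ι) : Prop :=
  t ∉ M ∧ CIset p {t} (Finset.univ \ insert t M) M

/-- A Markov boundary is a minimal Markov blanket. -/
def MBoundary (p : (∀ i, V i) → ℝ≥0) (t : ι) (M : Finset ι) : Prop :=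
  MBlanket p t M ∧ ∀ M' ⊂ M, ¬ MBlanket p t M'

lemma marg_congr (p : (∀ i, V i) → ℝ≥0) {S : Finset ι} {f f' : ∀ i, V i}
    (h : ∀ i ∈ S, f i = f' i) : marg p S f = marg p S f' := by
  unfold marg
  refine Finset.sum_congr rfl fun g _ => ?_
  refine if_congr ?_ rfl rfl
  constructor <;> intro hg i hi
  · rw [← h i hi]; exact hg i hi
  · rw [h i hi]; exact hg i hi

lemma marg_seteq (p : (∀ i, V i) → ℝ≥0) {S S' : Finset ι} (h : S = S') (f : ∀ i, V i) :
    marg p S f = marg p S' f := by rw [h]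

lemma marg_pos (p : (∀ i, V i) → ℝ≥0) (hpos : ∀ g, 0 < p g) (S : Finset ι) (f : ∀ i, V i) :
    0 < marg p S f := by
  have h1 : p f ≤ marg p S f := by
    have := Finset.single_le_sum
      (f := fun g => if ∀ i ∈ S, g i = f i then p g else 0)
      (fun _ _ => zero_le) (Finset.mem_univ f)
    simpa [marg] using this
  exact lt_of_lt_of_le (hpos f) h1

/-- override f on T by v -/
def ovr (T : Finset ι) (f : ∀ i, V i) (v : ∀ i : T, V i) : ∀ i, V i :=
  fun i => if h : i ∈ T then v ⟨i, h⟩ else f i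

lemma marg_marg (p : (∀ i, V i) → ℝ≥0) {S T : Finset ι} (hST : Disjoint S T) (f : ∀ i, V i) :
    marg p S f = ∑ v : (∀ i : T, V i), marg p (S ∪ T) (ovr T f v) := by
  unfold marg
  rw [Finset.sum_comm]
  refine Finset.sum_congr rfl fun g _ => ?_
  rw [Finset.sum_eq_single (fun i : T => g i)]
  · refine if_congr ?_ rfl rfl
    constructor
    · intro hg i hi
      rcases Finset.mem_union.mp hi with h1 | h1
      · have hiT : i ∉ T := Finset.disjoint_left.mp hST h1
        rw [ovr, dif_neg hiT]; exact hg i h1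
      · rw [ovr, dif_pos h1]
    · intro hg i hi
      have hiT : i ∉ T := Finset.disjoint_left.mp hST hi
      have := hg i (Finset.mem_union_left _ hi)
      rwa [ovr, dif_neg hiT] at this
  · intro v _ hv
    rw [if_neg]
    intro hg
    apply hv
    funext i
    have := hg i (Finset.mem_union_right _ i.2)
    rw [ovr, dif_pos i.2] at this
    exact this.symm
  · intro h; exact absurd (Finset.mem_univ _) h

lemma marg_ovr (p : (∀ i, V i) → ℝ≥0) {S T : Finset ι} (h : Disjoint S T)
    (f : ∀ i, V i) (v : ∀ i : T, V i) : marg p S (ovr T f v) = marg p S f :=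
  (marg_congr p fun i hi => by
    rw [ovr, dif_neg (Finset.disjoint_left.mp h hi)]).symm

lemma ci_decomp (p : (∀ i, V i) → ℝ≥0) {X Y W Z : Finset ι}
    (hY : Disjoint Y (X ∪ W ∪ Z)) (h : CIset p X (Y ∪ W) Z) : CIset p X W Z := by
  intro f
  have hXWZ : Disjoint (X ∪ W ∪ Z) Y := hY.symm
  have hWZ : Disjoint (W ∪ Z) Y := by
    refine Finset.disjoint_left.mpr fun i hi => Finset.disjoint_left.mp hXWZ ?_
    rcases Finset.mem_union.mp hi with h1 | h1
    · exact Finset.mem_union_left _ (Finset.mem_union_right _ h1)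
    · exact Finset.mem_union_right _ h1
  have hZY : Disjoint Z Y := by
    refine Finset.disjoint_left.mpr fun i hi => Finset.disjoint_left.mp hXWZ ?_
    exact Finset.mem_union_right _ hi
  have hXZY : Disjoint (X ∪ Z) Y := by
    refine Finset.disjoint_left.mpr fun i hi => Finset.disjoint_left.mp hXWZ ?_
    rcases Finset.mem_union.mp hi with h1 | h1
    · exact Finset.mem_union_left _ (Finset.mem_union_left _ h1)
    · exact Finset.mem_union_right _ h1
  have e1 : X ∪ W ∪ Z ∪ Y = X ∪ (Y ∪ W) ∪ Z := by ext x; simp [Finset.mem_union]; tauto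
  have e2 : W ∪ Z ∪ Y = Y ∪ W ∪ Z := by ext x; simp [Finset.mem_union]; tauto
  rw [marg_marg p hXWZ f, marg_marg p hWZ f, Finset.sum_mul, Finset.mul_sum]
  refine Finset.sum_congr rfl fun v _ => ?_
  calc marg p (X ∪ W ∪ Z ∪ Y) (ovr Y f v) * marg p Z f
      = marg p (X ∪ (Y ∪ W) ∪ Z) (ovr Y f v) * marg p Z (ovr Y f v) := by
        rw [marg_seteq p e1, marg_ovr p hZY]
    _ = marg p (X ∪ Z) (ovr Y f v) * marg p (Y ∪ W ∪ Z) (ovr Y f v) := h _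
    _ = marg p (X ∪ Z) f * marg p (W ∪ Z ∪ Y) (ovr Y f v) := by
        rw [marg_ovr p hXZY, marg_seteq p e2]

lemma ci_weak_union (p : (∀ i, V i) → ℝ≥0) (hpos : ∀ g, 0 < p g) {X Y W Z : Finset ι}
    (hY : Disjoint Y (X ∪ W ∪ Z)) (h : CIset p X (Y ∪ W) Z) : CIset p X Y (Z ∪ W) := by
  have hd := ci_decomp p hY h
  intro f
  have e1 : X ∪ Y ∪ (Z ∪ W) = X ∪ (Y ∪ W) ∪ Z := by ext x; simp [Finset.mem_union]; tauto
  have e2 : Y ∪ W ∪ Z = Y ∪ (Z ∪ W) := by ext x; simp [Finset.mem_union]; tauto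
  have e3 : Z ∪ W = W ∪ Z := Finset.union_comm _ _
  have e4 : X ∪ W ∪ Z = X ∪ (Z ∪ W) := by ext x; simp [Finset.mem_union]; tauto
  apply mul_left_cancel₀ (marg_pos p hpos Z f).ne'
  calc marg p Z f * (marg p (X ∪ Y ∪ (Z ∪ W)) f * marg p (Z ∪ W) f)
      = marg p (X ∪ (Y ∪ W) ∪ Z) f * marg p Z f * marg p (Z ∪ W) f := by
        rw [marg_seteq p e1]; ring
    _ = marg p (X ∪ Z) f * marg p (Y ∪ W ∪ Z) f * marg p (Z ∪ W) f := by rw [h f]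
    _ = marg p (X ∪ Z) f * marg p (W ∪ Z) f * marg p (Y ∪ (Z ∪ W)) f := by
        rw [marg_seteq p e2, marg_seteq p e3]; ring
    _ = marg p (X ∪ W ∪ Z) f * marg p Z f * marg p (Y ∪ (Z ∪ W)) f := by rw [hd f]
    _ = marg p Z f * (marg p (X ∪ (Z ∪ W)) f * marg p (Y ∪ (Z ∪ W)) f) := by
        rw [marg_seteq p e4]; ring

lemma ci_inter (p : (∀ i, V i) → ℝ≥0) (hpos : ∀ g, 0 < p g) {X Y W Z : Finset ι}
    (hXW : Disjoint X W) (hYW : Disjoint Y W) (hZW : Disjoint Z W)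
    (h1 : CIset p X Y (Z ∪ W)) (h2 : CIset p X W (Z ∪ Y)) : CIset p X (Y ∪ W) Z := by
  have ea : X ∪ Y ∪ (Z ∪ W) = X ∪ W ∪ (Z ∪ Y) := by ext x; simp [Finset.mem_union]; tauto
  have eb : Y ∪ (Z ∪ W) = W ∪ (Z ∪ Y) := by ext x; simp [Finset.mem_union]; tauto
  have ec : X ∪ (Z ∪ W) = X ∪ Z ∪ W := (Finset.union_assoc X Z W).symm
  have ed : X ∪ (Z ∪ Y) = X ∪ Z ∪ Y := (Finset.union_assoc X Z Y).symm
  -- key : cross ratio identity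
  have key : ∀ f, marg p (X ∪ Z ∪ W) f * marg p (Z ∪ Y) f
      = marg p (X ∪ Z ∪ Y) f * marg p (Z ∪ W) f := by
    intro f
    have k1 := h1 f
    have k2 := h2 f
    rw [marg_seteq p ec] at k1
    rw [← marg_seteq p ea, ← marg_seteq p eb, marg_seteq p ed] at k2
    apply mul_right_cancel₀ (marg_pos p hpos (Y ∪ (Z ∪ W)) f).ne'
    calc marg p (X ∪ Z ∪ W) f * marg p (Z ∪ Y) f * marg p (Y ∪ (Z ∪ W)) f
        = marg p (X ∪ Z ∪ W) f * marg p (Y ∪ (Z ∪ W)) f * marg p (Z ∪ Y) f := by ring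
      _ = marg p (X ∪ Y ∪ (Z ∪ W)) f * marg p (Z ∪ W) f * marg p (Z ∪ Y) f := by rw [k1]
      _ = (marg p (X ∪ Y ∪ (Z ∪ W)) f * marg p (Z ∪ Y) f) * marg p (Z ∪ W) f := by ring
      _ = (marg p (X ∪ Z ∪ Y) f * marg p (Y ∪ (Z ∪ W)) f) * marg p (Z ∪ W) f := by rw [k2]
      _ = marg p (X ∪ Z ∪ Y) f * marg p (Z ∪ W) f * marg p (Y ∪ (Z ∪ W)) f := by ring
  have hXZW : Disjoint (X ∪ Z) W := Finset.disjoint_union_left.mpr ⟨hXW, hZW⟩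
  have hZYW : Disjoint (Z ∪ Y) W := Finset.disjoint_union_left.mpr ⟨hZW, hYW⟩
  have hXZYW : Disjoint (X ∪ Z ∪ Y) W := Finset.disjoint_union_left.mpr ⟨hXZW, hYW⟩
  -- key2 : X ⊥ Y | Z essentially, in asymmetric form
  have key2 : ∀ f, marg p (X ∪ Z) f * marg p (Z ∪ Y) f
      = marg p (X ∪ Z ∪ Y) f * marg p Z f := by
    intro f
    calc marg p (X ∪ Z) f * marg p (Z ∪ Y) f
        = (∑ v : (∀ i : W, V i), marg p (X ∪ Z ∪ W) (ovr W f v)) * marg p (Z ∪ Y) f := by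
          rw [← marg_marg p hXZW f]
      _ = ∑ v : (∀ i : W, V i), marg p (X ∪ Z ∪ W) (ovr W f v) * marg p (Z ∪ Y) f := by
          rw [Finset.sum_mul]
      _ = ∑ v : (∀ i : W, V i), marg p (X ∪ Z ∪ Y) f * marg p (Z ∪ W) (ovr W f v) := by
          refine Finset.sum_congr rfl fun v _ => ?_
          rw [← marg_ovr p hZYW f v, key, marg_ovr p hXZYW]
      _ = marg p (X ∪ Z ∪ Y) f * marg p Z f := by
          rw [← Finset.mul_sum, ← marg_marg p hZW f]
  intro f
  have eA : X ∪ (Y ∪ W) ∪ Z = X ∪ W ∪ (Z ∪ Y) := by ext x; simp [Finset.mem_union]; tauto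
  have eB : X ∪ (Z ∪ Y) = X ∪ Z ∪ Y := ed
  have eC : W ∪ (Z ∪ Y) = Y ∪ W ∪ Z := by ext x; simp [Finset.mem_union]; tauto
  apply mul_left_cancel₀ (marg_pos p hpos (Z ∪ Y) f).ne'
  calc marg p (Z ∪ Y) f * (marg p (X ∪ (Y ∪ W) ∪ Z) f * marg p Z f)
      = marg p (X ∪ W ∪ (Z ∪ Y)) f * marg p (Z ∪ Y) f * marg p Z f := by
        rw [marg_seteq p eA]; ring
    _ = marg p (X ∪ (Z ∪ Y)) f * marg p (W ∪ (Z ∪ Y)) f * marg p Z f := by rw [h2 f]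
    _ = marg p (X ∪ Z ∪ Y) f * marg p Z f * marg p (Y ∪ W ∪ Z) f := by
        rw [marg_seteq p eB, marg_seteq p eC]; ring
    _ = marg p (X ∪ Z) f * marg p (Z ∪ Y) f * marg p (Y ∪ W ∪ Z) f := by rw [← key2]
    _ = marg p (Z ∪ Y) f * (marg p (X ∪ Z) f * marg p (Y ∪ W ∪ Z) f) := by ring

lemma ci_congr (p : (∀ i, V i) → ℝ≥0) {S T R T' R' : Finset ι}
    (h : CIset p S T R) (eT : T = T') (eR : R = R') : CIset p S T' R' := by
  subst eT; subst eR; exact h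

lemma blanket_inter (p : (∀ i, V i) → ℝ≥0) (hpos : ∀ g, 0 < p g) (t : ι)
    {M1 M2 : Finset ι} (hb1 : MBlanket p t M1) (hb2 : MBlanket p t M2) :
    MBlanket p t (M1 ∩ M2) := by
  obtain ⟨ht1, h1⟩ := hb1
  obtain ⟨ht2, h2⟩ := hb2
  have s1 : Finset.univ \ insert t M1 = (M2 \ M1) ∪ (Finset.univ \ insert t (M1 ∪ M2)) := by
    ext x
    by_cases hxt : x = t
    · subst hxt; simp [ht1, ht2]
    · simp [hxt]; tauto
  have s2 : M1 = (M1 ∩ M2) ∪ (M1 \ M2) := by ext x; simp; tauto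
  have s3 : Finset.univ \ insert t M2 = (M1 \ M2) ∪ (Finset.univ \ insert t (M1 ∪ M2)) := by
    ext x
    by_cases hxt : x = t
    · subst hxt; simp [ht1, ht2]
    · simp [hxt]; tauto
  have s4 : M2 = (M1 ∩ M2) ∪ (M2 \ M1) := by ext x; simp; tauto
  -- abbreviations
  have h1' : CIset p {t} ((M2 \ M1) ∪ (Finset.univ \ insert t (M1 ∪ M2)))
      ((M1 ∩ M2) ∪ (M1 \ M2)) := ci_congr p h1 s1 s2
  have h2' : CIset p {t} ((M1 \ M2) ∪ (Finset.univ \ insert t (M1 ∪ M2)))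
      ((M1 ∩ M2) ∪ (M2 \ M1)) := ci_congr p h2 s3 s4
  have hdisjA : Disjoint (M1 \ M2)
      ({t} ∪ (Finset.univ \ insert t (M1 ∪ M2)) ∪ ((M1 ∩ M2) ∪ (M2 \ M1))) := by
    refine Finset.disjoint_left.mpr fun i hi hmem => ?_
    simp at hi hmem
    rcases hmem with h | h | h
    · exact ht1 (h ▸ hi.1)
    · tauto
    · tauto
  have hw : CIset p {t} (M1 \ M2)
      (((M1 ∩ M2) ∪ (M2 \ M1)) ∪ (Finset.univ \ insert t (M1 ∪ M2))) :=
    ci_weak_union p hpos hdisjA h2'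
  have hw' : CIset p {t} (M1 \ M2)
      ((M1 ∩ M2) ∪ ((M2 \ M1) ∪ (Finset.univ \ insert t (M1 ∪ M2)))) :=
    ci_congr p hw rfl (Finset.union_assoc _ _ _)
  have hXW : Disjoint ({t} : Finset ι) (M1 \ M2) := by
    simp [Finset.disjoint_left, ht1]
  have hYW : Disjoint ((M2 \ M1) ∪ (Finset.univ \ insert t (M1 ∪ M2))) (M1 \ M2) := by
    refine Finset.disjoint_left.mpr fun i hi hmem => ?_
    simp at hi hmem
    tauto
  have hZW : Disjoint (M1 ∩ M2) (M1 \ M2) := by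
    refine Finset.disjoint_left.mpr fun i hi hmem => ?_
    simp at hi hmem
    tauto
  have hfin : CIset p {t}
      (((M2 \ M1) ∪ (Finset.univ \ insert t (M1 ∪ M2))) ∪ (M1 \ M2)) (M1 ∩ M2) :=
    ci_inter p hpos hXW hYW hZW h1' hw'
  have s5 : ((M2 \ M1) ∪ (Finset.univ \ insert t (M1 ∪ M2))) ∪ (M1 \ M2)
      = Finset.univ \ insert t (M1 ∩ M2) := by
    ext x
    by_cases hxt : x = t
    · subst hxt; simp [ht1, ht2]
    · simp [hxt]; tauto
  refine ⟨by simp [ht1], ci_congr p hfin s5 rfl⟩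


/-- For a strictly positive joint distribution, the intersection of any two Markov
blankets of `t` is again a Markov blanket of `t`, and hence `t` has a unique
Markov boundary. -/
theorem unique_markov_boundary (p : (∀ i, V i) → ℝ≥0)
    (hsum : ∑ g, p g = 1) (hpos : ∀ g, 0 < p g) (t : ι) :
    (∀ M1 M2, MBlanket p t M1 → MBlanket p t M2 → MBlanket p t (M1 ∩ M2)) ∧
    ∃! M, MBoundary p t M := by
  classical
  refine ⟨fun M1 M2 h1 h2 => blanket_inter p hpos t h1 h2, ?_⟩
  -- a trivial blanket exists
  have hne : MBlanket p t (Finset.univ \ {t}) := by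
    refine ⟨by simp, ?_⟩
    have e0 : Finset.univ \ insert t (Finset.univ \ {t}) = (∅ : Finset ι) := by
      ext x; by_cases hxt : x = t <;> simp [hxt]
    rw [e0]
    intro f
    rw [Finset.union_empty, Finset.empty_union]
  -- pick a minimal blanket
  obtain ⟨m, hm, hmin'⟩ := Finset.exists_minimal
    (s := Finset.univ.filter (fun M => MBlanket p t M))
    ⟨Finset.univ \ {t}, Finset.mem_filter.mpr ⟨Finset.mem_univ _, hne⟩⟩
  have hmin : ∀ x ∈ Finset.univ.filter (fun M => MBlanket p t M), ¬ x < m :=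
    fun x hx hlt => lt_irrefl _ (lt_of_lt_of_le hlt (hmin' hx hlt.le))
  have hmbl : MBlanket p t m := (Finset.mem_filter.mp hm).2
  have hmb : MBoundary p t m := by
    refine ⟨hmbl, fun M' hss hbl => ?_⟩
    exact hmin M' (Finset.mem_filter.mpr ⟨Finset.mem_univ _, hbl⟩) hss
  refine ⟨m, hmb, fun M' hM' => ?_⟩
  have hi1 : MBlanket p t (M' ∩ m) := blanket_inter p hpos t hM'.1 hmbl
  have e1 : M' ∩ m = M' := by
    by_contra hne'
    exact hM'.2 (M' ∩ m) (lt_of_le_of_ne Finset.inter_subset_left hne') hi1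
  have e2 : M' ∩ m = m := by
    by_contra hne'
    exact hmb.2 (M' ∩ m) (lt_of_le_of_ne Finset.inter_subset_right hne') hi1
  rw [← e1, e2]
end

section
/- Under the semi-graphoid axioms, the union of two disjoint label powersets is a label powerset: if Z1 ⊥ (Y \ Z1) | X and Z2 ⊥ (Y \ Z2) | X with Z1 ∩ Z2 = ∅, then (Z1 ∪ Z2) ⊥ (Y \ (Z1 ∪ Z2)) | X. -/
open Set

/-- Under the semi-graphoid axioms, the union of two disjoint label powersets is a
label powerset. -/
theorem union_of_disjoint_label_powersets {α : Type*} (G : Semigraphoid α)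
    (X Y Z1 Z2 : Set α) (hXY : Disjoint X Y)
    (hZ1 : Z1 ⊆ Y) (hZ2 : Z2 ⊆ Y) (hdisj : Disjoint Z1 Z2)
    (hLP1 : G.ci Z1 (Y \ Z1) X) (hLP2 : G.ci Z2 (Y \ Z2) X) :
    G.ci (Z1 ∪ Z2) (Y \ (Z1 ∪ Z2)) X := by
  set W := Y \ (Z1 ∪ Z2) with hW
  have e1 : Y \ Z1 = W ∪ Z2 := by
    ext x
    have h2 := @hZ2 x
    have hd : x ∈ Z1 → x ∉ Z2 := fun h => Set.disjoint_left.mp hdisj h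
    simp only [hW, mem_diff, mem_union]
    tauto
  have e2 : Y \ Z2 = W ∪ Z1 := by
    ext x
    have h1 := @hZ1 x
    have hd : x ∈ Z1 → x ∉ Z2 := fun h => Set.disjoint_left.mp hdisj h
    simp only [hW, mem_diff, mem_union]
    tauto
  have dZ12W : Disjoint (Z1 ∪ Z2) W := Set.disjoint_sdiff_right
  have dZ1W : Disjoint Z1 W := dZ12W.mono_left subset_union_left
  have dZ2W : Disjoint Z2 W := dZ12W.mono_left subset_union_right
  have dZ1X : Disjoint Z1 X := (hXY.symm.mono_left hZ1)
  have dZ2X : Disjoint Z2 X := (hXY.symm.mono_left hZ2)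
  have dWX : Disjoint W X := hXY.symm.mono_left diff_subset
  have dXZ2 : Disjoint X Z2 := dZ2X.symm
  have dXZ1 : Disjoint X Z1 := dZ1X.symm
  -- Step 1: weak union on hLP1
  have h1 : G.ci Z1 W (X ∪ Z2) :=
    G.weakUnion dZ1W dZ1X hdisj dWX dZ2W.symm dXZ2 (e1 ▸ hLP1)
  -- Step 2: decomposition on hLP2
  have h2 : G.ci Z2 W X :=
    G.decomposition dZ2W dZ2X hdisj.symm dWX dZ1W.symm dXZ1 (e2 ▸ hLP2)
  have h1' : G.ci W Z1 (X ∪ Z2) :=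
    G.symm dZ1W (Set.disjoint_union_right.mpr ⟨dZ1X, hdisj⟩)
      (Set.disjoint_union_right.mpr ⟨dWX, dZ2W.symm⟩) h1
  have h2' : G.ci W Z2 X := G.symm dZ2W dZ2X dWX h2
  have h3 : G.ci W (Z1 ∪ Z2) X :=
    G.contraction dZ1W.symm dWX dZ2W.symm dZ1X hdisj dXZ2 h1' h2'
  exact G.symm dZ12W.symm dWX
    (Set.disjoint_union_left.mpr ⟨dZ1X, dZ2X⟩) h3
end
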